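/- The kernel P_X is Π_X-reversible and positive. If, for each y, H_{2|y} is Π_{X|Y}(·|y)-reversible and positive, then P̄_X is Π_X-reversible and positive. -/

import Mathlib

/-!
Write `P x = ∫ M_{(x,y)} κ(x, dy)` with `M_{(x,y)} = η_y` for `P_X` and `M_{(x,y)} = H_{2|y}(·|x)`
for `P̄_X`. Since `Π = Π_X ⊗ κ` is also `Π_Y ⊗ η` with the coordinates swapped, the joint law
`Π_X ⊗ P` of one step of the chain is the mixture over `y ∼ Π_Y` of the joint laws `η_y ⊗ M_y`.
Reversibility means that the joint law is invariant under swapping the coordinates, and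
`⟨P f, f⟩` is the integral of `f(x) f(x')` against it (integrable because both marginals are `Π_X`).
Both properties therefore pass from every `η_y ⊗ M_y` to the mixture; the kernel `x ↦ η_y` is
trivially `η_y`-reversible and positive.
-/

open MeasureTheory ENNReal

noncomputable section

/-- Reversibility of a kernel `k` with respect to `ν`. -/
def KernelReversible {α : Type*} [MeasurableSpace α] (ν : Measure α) (k : α → Measure α) : Prop :=
  ∀ A B : Set α, MeasurableSet A → MeasurableSet B →
    ∫⁻ x in A, k x B ∂ν = ∫⁻ x in B, k x A ∂ν

/-- Positivity of a kernel `k` with respect to `ν`. -/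
def KernelPositive {α : Type*} [MeasurableSpace α] (ν : Measure α) (k : α → Measure α) : Prop :=
  ∀ f : α → ℝ, MemLp f 2 ν → 0 ≤ ∫ x, (∫ y, f y ∂(k x)) * f x ∂ν

open ProbabilityTheory

namespace MeasureTheory.Measure

variable {α β : Type*} [MeasurableSpace α] [MeasurableSpace β]

lemma bind_map_prodMk_left_eq_compProd (μ : Measure α) [SFinite μ] (κ : Kernel α β)
    [IsSFiniteKernel κ] : μ.bind (fun a => (κ a).map (Prod.mk a)) = μ ⊗ₘ κ := by
  rw [compProd_eq_comp_prod]
  congr 1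
  funext a
  rw [Kernel.prod_apply, Kernel.id_apply, dirac_prod]

lemma bind_map_prodMk_right_eq_map_swap_compProd (μ : Measure α) [SFinite μ] (κ : Kernel α β)
    [IsSFiniteKernel κ] :
    μ.bind (fun a => (κ a).map (fun b => (b, a))) = (μ ⊗ₘ κ).map Prod.swap := by
  rw [compProd_eq_comp_prod, map_comp _ _ measurable_swap]
  congr 1
  funext a
  rw [Kernel.map_apply _ measurable_swap, Kernel.prod_apply, Kernel.id_apply, prod_swap,
    prod_dirac]

lemma integral_comp {E : Type*} [NormedAddCommGroup E] [NormedSpace ℝ E] {μ : Measure α}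
    {κ : Kernel α β} {f : β → E} (hf : Integrable f (κ ∘ₘ μ)) :
    ∫ y, f y ∂(κ ∘ₘ μ) = ∫ x, ∫ y, f y ∂κ x ∂μ := by
  rw [comp_eq_comp_const_apply] at hf ⊢
  exact Kernel.integral_comp hf

end MeasureTheory.Measure

namespace ProbabilityTheory.Kernel

variable {α β γ : Type*} [MeasurableSpace α] [MeasurableSpace β] [MeasurableSpace γ]

lemma snd_compProd_apply (κ : Kernel α β) [IsSFiniteKernel κ] (η : Kernel (α × β) γ)
    [IsSFiniteKernel η] (a : α) : (κ ⊗ₖ η).snd a = (κ a).bind (fun b => η (a, b)) := by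
  rw [snd_apply, compProd_apply_eq_compProd_sectR, ← Measure.snd, Measure.snd_compProd]
  rfl

lemma sectR_swapLeft (η : Kernel (α × β) γ) (b : β) : η.swapLeft.sectR b = η.sectL b := rfl

end ProbabilityTheory.Kernel

lemma MeasureTheory.MemLp.ae_memLp_of_comp {α β : Type*} [MeasurableSpace α]
    [MeasurableSpace β] {μ : Measure α} {κ : Kernel α β} {f : β → ℝ}
    (hf : MemLp f 2 (κ ∘ₘ μ)) : ∀ᵐ x ∂μ, MemLp f 2 (κ x) := by
  have hsq := (memLp_two_iff_integrable_sq hf.1).1 hf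
  filter_upwards [Measure.ae_ae_of_ae_comp hf.1.ae_eq_mk,
    Measure.ae_integrable_of_integrable_comp hsq] with x hmk hint
  exact (memLp_two_iff_integrable_sq
    (hf.1.stronglyMeasurable_mk.aestronglyMeasurable.congr (Filter.EventuallyEq.symm hmk))).2 hint

section SingleKernel

variable {α : Type*} [MeasurableSpace α] {ν : Measure α} {P : Kernel α α}

lemma kernelReversible_const (μ : Measure α) : KernelReversible μ (fun _ => μ) := by
  intro A B _ _
  rw [setLIntegral_const, setLIntegral_const, mul_comm]

lemma kernelPositive_const (μ : Measure α) : KernelPositive μ (fun _ => μ) := by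
  intro f _
  rw [integral_const_mul]
  exact mul_self_nonneg _

lemma kernelReversible_iff_map_swap_compProd [IsFiniteMeasure ν] [IsFiniteKernel P] :
    KernelReversible ν P ↔ (ν ⊗ₘ P).map Prod.swap = ν ⊗ₘ P := by
  have hswap {A B : Set α} (hA : MeasurableSet A) (hB : MeasurableSet B) :
      (ν ⊗ₘ P).map Prod.swap (A ×ˢ B) = ∫⁻ x in B, P x A ∂ν := by
    rw [Measure.map_apply measurable_swap (hA.prod hB), Set.preimage_swap_prod,
      Measure.compProd_apply_prod hB hA]
  constructor
  · intro h
    refine ext_of_generate_finite _ generateFrom_prod.symm isPiSystem_prod ?_ ?_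
    · rintro _ ⟨A, hA, B, hB, rfl⟩
      rw [hswap hA hB, Measure.compProd_apply_prod hA hB, h A B hA hB]
    · rw [Measure.map_apply measurable_swap .univ, Set.preimage_univ]
  · intro h A B hA hB
    rw [← Measure.compProd_apply_prod hA hB, ← hswap hA hB, h]

lemma KernelReversible.comp_eq [IsFiniteMeasure ν] [IsMarkovKernel P]
    (h : KernelReversible ν P) : P ∘ₘ ν = ν := by
  rw [← Measure.snd_compProd, ← kernelReversible_iff_map_swap_compProd.1 h,
    Measure.snd_map_swap, Measure.fst_compProd]

section Stationary

variable [IsFiniteMeasure ν] [IsMarkovKernel P] {f : α → ℝ}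

lemma integrable_mul_compProd (hP : P ∘ₘ ν = ν) (hf : MemLp f 2 ν) :
    Integrable (fun p => f p.2 * f p.1) (ν ⊗ₘ P) := by
  have hsnd : MemLp f 2 ((ν ⊗ₘ P).map Prod.snd) := by
    rwa [← Measure.snd, Measure.snd_compProd, hP]
  have hfst : MemLp f 2 ((ν ⊗ₘ P).map Prod.fst) := by
    rwa [← Measure.fst, Measure.fst_compProd]
  exact ((memLp_map_measure_iff hsnd.1 measurable_snd.aemeasurable).1 hsnd).integrable_mul
    ((memLp_map_measure_iff hfst.1 measurable_fst.aemeasurable).1 hfst)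

lemma integral_integral_mul_eq_integral_compProd (hP : P ∘ₘ ν = ν) (hf : MemLp f 2 ν) :
    ∫ x, (∫ y, f y ∂P x) * f x ∂ν = ∫ p, f p.2 * f p.1 ∂(ν ⊗ₘ P) := by
  rw [Measure.integral_compProd (integrable_mul_compProd hP hf)]
  simp_rw [integral_mul_const]

end Stationary

end SingleKernel

section Mixture

variable {X Y : Type*} [MeasurableSpace X] [MeasurableSpace Y]
  {ν : Measure X} {ρ : Measure Y} {κ : Kernel X Y} {η : Kernel Y X} {M : Kernel (X × Y) X}

lemma eq_comp_of_compProd_eq_map_swap [IsSFiniteKernel η] [IsMarkovKernel κ] [SFinite ν]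
    [SFinite ρ] (hπ : ν ⊗ₘ κ = (ρ ⊗ₘ η).map Prod.swap) : ν = η ∘ₘ ρ := by
  rw [← Measure.fst_compProd ν κ, hπ, Measure.fst_map_swap, Measure.snd_compProd]

lemma compProd_snd_compProd_eq_comp [SFinite ν] [SFinite ρ] [IsSFiniteKernel κ]
    [IsSFiniteKernel η] [IsSFiniteKernel M] (hπ : ν ⊗ₘ κ = (ρ ⊗ₘ η).map Prod.swap) :
    ν ⊗ₘ (κ ⊗ₖ M).snd = (η ⊗ₖ M.swapLeft) ∘ₘ ρ := by
  ext s hs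
  have hF : Measurable fun p : X × Y => M p (Prod.mk p.1 ⁻¹' s) :=
    Kernel.measurable_kernel_prodMk_left
      (t := (fun q : (X × Y) × X => (q.1.1, q.2)) ⁻¹' s) (hs.preimage (by fun_prop))
  calc (ν ⊗ₘ (κ ⊗ₖ M).snd) s
      = ∫⁻ x, ∫⁻ y, M (x, y) (Prod.mk x ⁻¹' s) ∂κ x ∂ν := by
        rw [Measure.compProd_apply hs]
        refine lintegral_congr fun x => ?_
        rw [Kernel.snd_compProd_apply]
        exact Measure.bind_apply (measurable_prodMk_left hs) (M.sectR x).aemeasurable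
    _ = ∫⁻ p, M p (Prod.mk p.1 ⁻¹' s) ∂(ρ ⊗ₘ η).map Prod.swap := by
        rw [← hπ, Measure.lintegral_compProd hF]
    _ = ∫⁻ y, ∫⁻ x, M (x, y) (Prod.mk x ⁻¹' s) ∂η y ∂ρ := by
        rw [lintegral_map hF measurable_swap]
        exact Measure.lintegral_compProd (hF.comp measurable_swap)
    _ = ((η ⊗ₖ M.swapLeft) ∘ₘ ρ) s := by
        rw [Measure.bind_apply hs (Kernel.aemeasurable _)]
        refine lintegral_congr fun y => ?_
        rw [Kernel.compProd_apply hs]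
        rfl

variable [IsFiniteMeasure ν] [SFinite ρ] [IsMarkovKernel κ] [IsMarkovKernel η] [IsMarkovKernel M]

lemma kernelReversible_snd_compProd (hπ : ν ⊗ₘ κ = (ρ ⊗ₘ η).map Prod.swap)
    (hM : ∀ y, KernelReversible (η y) (M.sectL y)) : KernelReversible ν (κ ⊗ₖ M).snd := by
  rw [kernelReversible_iff_map_swap_compProd, compProd_snd_compProd_eq_comp hπ,
    Measure.map_comp _ _ measurable_swap]
  refine Measure.comp_congr (ae_of_all _ fun y => ?_)
  rw [Kernel.map_apply _ measurable_swap, Kernel.compProd_apply_eq_compProd_sectR,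
    Kernel.sectR_swapLeft]
  exact kernelReversible_iff_map_swap_compProd.1 (hM y)

lemma kernelPositive_snd_compProd (hπ : ν ⊗ₘ κ = (ρ ⊗ₘ η).map Prod.swap)
    (hM : ∀ y, KernelReversible (η y) (M.sectL y) ∧ KernelPositive (η y) (M.sectL y)) :
    KernelPositive ν (κ ⊗ₖ M).snd := by
  intro f hf
  have hstat := (kernelReversible_snd_compProd hπ fun y => (hM y).1).comp_eq
  have hint := integrable_mul_compProd hstat hf
  rw [compProd_snd_compProd_eq_comp hπ] at hint
  rw [integral_integral_mul_eq_integral_compProd hstat hf, compProd_snd_compProd_eq_comp hπ,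
    Measure.integral_comp hint]
  rw [eq_comp_of_compProd_eq_map_swap hπ] at hf
  refine integral_nonneg_of_ae ?_
  filter_upwards [hf.ae_memLp_of_comp] with y hy
  rw [Kernel.compProd_apply_eq_compProd_sectR, Kernel.sectR_swapLeft,
    ← integral_integral_mul_eq_integral_compProd (hM y).1.comp_eq hy]
  exact (hM y).2 f hy

theorem kernelReversible_and_kernelPositive_bind (hπ : ν ⊗ₘ κ = (ρ ⊗ₘ η).map Prod.swap)
    (hM : ∀ y, KernelReversible (η y) (fun x => M (x, y)) ∧
      KernelPositive (η y) (fun x => M (x, y))) :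
    KernelReversible ν (fun x => (κ x).bind fun y => M (x, y)) ∧
      KernelPositive ν (fun x => (κ x).bind fun y => M (x, y)) := by
  rw [← funext (Kernel.snd_compProd_apply κ M)]
  exact ⟨kernelReversible_snd_compProd hπ fun y => (hM y).1, kernelPositive_snd_compProd hπ hM⟩

end Mixture

variable {X Y : Type*} [MeasurableSpace X] [MeasurableSpace Y]

/-- `P_X` is `Π_X`-reversible and positive; if for each `y` the kernel
`H_{2|y}` is `Π_{X|Y}(·|y)`-reversible and positive, then `P̄_X` is `Π_X`-reversible and
positive. -/
theorem stmt15
    (π : Measure (X × Y)) [IsProbabilityMeasure π]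
    (κ : X → Measure Y) (hκmeas : Measurable κ) (hκprob : ∀ x, IsProbabilityMeasure (κ x))
    (η : Y → Measure X) (hηmeas : Measurable η) (hηprob : ∀ y, IsProbabilityMeasure (η y))
    (hκdis : π = (π.fst).bind (fun x => (κ x).map (fun y => (x, y))))
    (hηdis : π = (π.snd).bind (fun y => (η y).map (fun x => (x, y))))
    (KH₂ : X × Y → Measure X) (hKH₂meas : Measurable KH₂)
    (hKH₂prob : ∀ p, IsProbabilityMeasure (KH₂ p)) :
    (KernelReversible π.fst (fun x => (κ x).bind η) ∧
      KernelPositive π.fst (fun x => (κ x).bind η)) ∧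
    ((∀ y, KernelReversible (η y) (fun x => KH₂ (x, y)) ∧
        KernelPositive (η y) (fun x => KH₂ (x, y))) →
      KernelReversible π.fst (fun x => (κ x).bind (fun y => KH₂ (x, y))) ∧
        KernelPositive π.fst (fun x => (κ x).bind (fun y => KH₂ (x, y)))) := by
  let K : Kernel X Y := ⟨κ, hκmeas⟩
  let E : Kernel Y X := ⟨η, hηmeas⟩
  let H : Kernel (X × Y) X := ⟨KH₂, hKH₂meas⟩
  have : IsMarkovKernel K := ⟨hκprob⟩
  have : IsMarkovKernel E := ⟨hηprob⟩
  have : IsMarkovKernel H := ⟨hKH₂prob⟩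
  have hπ : π.fst ⊗ₘ K = (π.snd ⊗ₘ E).map Prod.swap := by
    rw [← Measure.bind_map_prodMk_left_eq_compProd,
      ← Measure.bind_map_prodMk_right_eq_map_swap_compProd]
    exact hκdis.symm.trans hηdis
  refine ⟨?_, kernelReversible_and_kernelPositive_bind (M := H) hπ⟩
  have h := kernelReversible_and_kernelPositive_bind (M := Kernel.prodMkLeft X E) hπ
    fun y => ⟨kernelReversible_const (η y), kernelPositive_const (η y)⟩
  simp only [Kernel.prodMkLeft_apply] at h
  exact h

end
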